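/- For every integer n ≥ 2, Σ_{k=1}^{n−1} H_k²/((k+1)(k+2)) = H̄_n + (n − H_n² − 2H_n)/(n+1), and Σ_{k=1}^{n−1} H_k²/((k+2)(k+3)) = H̄_n/2 + (11n² + 21n)/(8(n+1)(n+2)) − H_n(2n+3)/((n+1)(n+2)) − H_n²/(n+2). -/
import Mathlib


open Finset

/-- `n`-th harmonic number. -/
noncomputable def H (n : ℕ) : ℝ := ∑ k ∈ Finset.Icc 1 n, (1 : ℝ) / k

/-- Second-order harmonic number. -/
noncomputable def Hbar (n : ℕ) : ℝ := ∑ k ∈ Finset.Icc 1 n, (1 : ℝ) / (k : ℝ) ^ 2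

lemma H_succ (n : ℕ) : H (n + 1) = H n + 1 / ((n : ℝ) + 1) := by
  unfold H
  rw [Finset.sum_Icc_succ_top (by omega)]
  push_cast; ring

lemma Hbar_succ (n : ℕ) : Hbar (n + 1) = Hbar n + 1 / ((n : ℝ) + 1) ^ 2 := by
  unfold Hbar
  rw [Finset.sum_Icc_succ_top (by omega)]
  push_cast; ring

theorem sum_H_sq_finite (n : ℕ) (hn : 2 ≤ n) :
    (∑ k ∈ Finset.Icc 1 (n - 1), (H k) ^ 2 / (((k : ℝ) + 1) * ((k : ℝ) + 2)) =
        Hbar n + ((n : ℝ) - (H n) ^ 2 - 2 * H n) / ((n : ℝ) + 1)) ∧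
    (∑ k ∈ Finset.Icc 1 (n - 1), (H k) ^ 2 / (((k : ℝ) + 2) * ((k : ℝ) + 3)) =
        Hbar n / 2 + (11 * (n : ℝ) ^ 2 + 21 * (n : ℝ)) / (8 * ((n : ℝ) + 1) * ((n : ℝ) + 2)) -
          H n * (2 * (n : ℝ) + 3) / (((n : ℝ) + 1) * ((n : ℝ) + 2)) -
          (H n) ^ 2 / ((n : ℝ) + 2)) := by
  induction n, hn using Nat.le_induction with
  | base =>
      have h1 : H 1 = 1 := by unfold H; norm_num
      have h2 : H 2 = 1 + 1/2 := by rw [show (2:ℕ) = 1 + 1 from rfl, H_succ, h1]; norm_num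
      have hb1 : Hbar 1 = 1 := by unfold Hbar; norm_num
      have hb2 : Hbar 2 = 1 + 1/4 := by
        unfold Hbar; rw [show Finset.Icc 1 2 = {1, 2} from rfl]; norm_num
      constructor <;> simp [h1, h2, hb2] <;> norm_num
  | succ n hn ih =>
      obtain ⟨ih1, ih2⟩ := ih
      have hsum : ∀ f : ℕ → ℝ, ∑ k ∈ Finset.Icc 1 (n + 1 - 1), f k =
          (∑ k ∈ Finset.Icc 1 (n - 1), f k) + f n := by
        intro f
        have h1 : n + 1 - 1 = (n - 1) + 1 := by omega
        have h2 : (n - 1) + 1 = n := by omega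
        rw [h1, Finset.sum_Icc_succ_top (by omega), h2]
      have hne1 : (n : ℝ) + 1 ≠ 0 := by positivity
      have hne2 : (n : ℝ) + 2 ≠ 0 := by positivity
      have hne3 : (n : ℝ) + 3 ≠ 0 := by positivity
      have hH : H (n + 1) = H n + 1 / ((n : ℝ) + 1) := H_succ n
      have hHb : Hbar (n + 1) = Hbar n + 1 / ((n : ℝ) + 1) ^ 2 := Hbar_succ n
      constructor
      · rw [hsum, ih1, hH, hHb]
        push_cast
        field_simp
        ring
      · rw [hsum, ih2, hH, hHb]
        push_cast
        field_simp
        ring
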